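/- arXiv:2303.15588 — 4 statements merged into one kernel-verified Lean document; each statement's English description precedes it below -/
import Mathlib

section
/- Let M ∈ ℝ^{m×s} have rank s and let v ∈ ℝ^m with ‖v‖₂ = 1. Set W := Mᵀ(I − vvᵀ)M, where I is the m×m identity matrix. Then W is invertible (in fact, symmetric positive definite) if and only if v ∉ range(M), and in the invertible case W⁻¹ = (MᵀM)⁻¹ + (M†v)(M†v)ᵀ / (1 − vᵀM M†v), where M† := (MᵀM)⁻¹Mᵀ. -/
/-!
With `P := 1 - v vᵀ`, the orthogonal projection onto `v⊥` (as `‖v‖ = 1`), the matrix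
`W = Mᵀ P M = (P M)ᵀ (P M)` is a Gram matrix, hence positive definite exactly when `P M` is
injective. Since `M` is injective, `P M x = 0` forces `M x ∈ span v`, which for `x ≠ 0` happens
iff `v ∈ range M`. On the other hand `W = MᵀM - u uᵀ` with `u = Mᵀ v` is a rank-one update of the
invertible `MᵀM`, so `W⁻¹` is given by the Sherman–Morrison formula, where
`(MᵀM)⁻¹ u = M† v` and `uᵀ (MᵀM)⁻¹ u = vᵀ M M† v`.
-/

open Matrix Filter Topology
open scoped BigOperators Classical

noncomputable def l2 {k : ℕ} (x : Fin k → ℝ) : ℝ := Real.sqrt (∑ i, (x i) ^ 2)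

noncomputable def l1 {k : ℕ} (x : Fin k → ℝ) : ℝ := ∑ i, |x i|

noncomputable def linf {k : ℕ} (x : Fin k → ℝ) : ℝ := sSup (Set.range fun i => |x i|)

noncomputable def dotp {k : ℕ} (x y : Fin k → ℝ) : ℝ := ∑ i, x i * y i

noncomputable def pinv {m s : ℕ} (M : Matrix (Fin m) (Fin s) ℝ) :
    Matrix (Fin s) (Fin m) ℝ := (Mᵀ * M)⁻¹ * Mᵀ

namespace Matrix

variable {K m n : Type*}

theorem mulVec_injective_of_rank_eq_card [Field K] [Fintype n] {A : Matrix m n K}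
    (h : A.rank = Fintype.card n) : Function.Injective A.mulVec := by
  rw [mulVec_injective_iff, linearIndependent_iff_card_eq_finrank_span, ← h,
    rank_eq_finrank_span_cols]
  rfl

theorem posDef_transpose_mul_self_iff [Field K] [PartialOrder K] [StarRing K] [TrivialStar K]
    [StarOrderedRing K] [Fintype m] [Fintype n] [DecidableEq n] {A : Matrix m n K} :
    (Aᵀ * A).PosDef ↔ Function.Injective A.mulVec := by
  rw [← conjTranspose_eq_transpose_of_trivial]
  refine ⟨fun h => ?_, PosDef.conjTranspose_mul_self A⟩
  have hAA : Function.Injective (Aᴴ.mulVec ∘ A.mulVec) := by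
    simpa only [Function.comp_def, mulVec_mulVec] using mulVec_injective_iff_isUnit.2 h.isUnit
  exact hAA.of_comp

section OneSubVecMulVec

variable [CommRing K] [DecidableEq m]

theorem transpose_one_sub_vecMulVec_self (v : m → K) :
    (1 - vecMulVec v v)ᵀ = 1 - vecMulVec v v := by
  rw [transpose_sub, transpose_one, transpose_vecMulVec]

variable [Fintype m]

theorem one_sub_vecMulVec_self_mul_self {v : m → K} (hv : v ⬝ᵥ v = 1) :
    (1 - vecMulVec v v) * (1 - vecMulVec v v) = 1 - vecMulVec v v := by
  rw [sub_mul, mul_sub, mul_sub, vecMulVec_mul_vecMulVec, hv, one_smul]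
  simp

theorem one_sub_vecMulVec_self_mulVec (v y : m → K) :
    (1 - vecMulVec v v) *ᵥ y = y - (v ⬝ᵥ y) • v := by
  rw [sub_mulVec, one_mulVec, vecMulVec_mulVec, op_smul_eq_smul]

theorem transpose_mul_one_sub_vecMulVec_mul [Fintype n] (M : Matrix m n K) (v : m → K) :
    Mᵀ * (1 - vecMulVec v v) * M = Mᵀ * M - vecMulVec (Mᵀ *ᵥ v) (Mᵀ *ᵥ v) := by
  rw [Matrix.mul_sub, Matrix.mul_one, Matrix.sub_mul, mul_vecMulVec, vecMulVec_mul,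
    mulVec_transpose]

theorem transpose_mul_one_sub_vecMulVec_mul_eq_gram [Fintype n] (M : Matrix m n K) {v : m → K}
    (hv : v ⬝ᵥ v = 1) :
    Mᵀ * (1 - vecMulVec v v) * M = ((1 - vecMulVec v v) * M)ᵀ * ((1 - vecMulVec v v) * M) := by
  rw [transpose_mul, transpose_one_sub_vecMulVec_self, ← Matrix.mul_assoc (Mᵀ * _),
    Matrix.mul_assoc Mᵀ (1 - _) (1 - _), one_sub_vecMulVec_self_mul_self hv]

end OneSubVecMulVec

theorem injective_mulVec_one_sub_vecMulVec_mul_iff [Field K] [DecidableEq m]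
    [Fintype m] [Fintype n] {M : Matrix m n K} (hM : Function.Injective M.mulVec) {v : m → K}
    (hv : v ⬝ᵥ v = 1) :
    Function.Injective ((1 - vecMulVec v v) * M).mulVec ↔ v ∉ Set.range M.mulVec := by
  rw [← coe_mulVecLin, injective_iff_map_eq_zero]
  simp only [mulVecLin_apply, ← mulVec_mulVec, one_sub_vecMulVec_self_mulVec, sub_eq_zero]
  constructor
  · rintro h ⟨x, rfl⟩
    have hx : x = 0 := h x (by rw [hv, one_smul])
    simp [hx] at hv
  · intro hvM x hx
    set c := v ⬝ᵥ M *ᵥ x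
    by_cases hc : c = 0
    · exact hM (by rw [hx, hc, zero_smul, mulVec_zero])
    · refine absurd ⟨c⁻¹ • x, ?_⟩ hvM
      rw [mulVec_smul, hx, smul_smul, inv_mul_cancel₀ hc, one_smul]

theorem posDef_transpose_mul_one_sub_vecMulVec_mul_iff [Field K] [PartialOrder K] [StarRing K]
    [TrivialStar K] [StarOrderedRing K] [DecidableEq m] [Fintype m] [Fintype n] [DecidableEq n]
    {M : Matrix m n K} (hM : Function.Injective M.mulVec) {v : m → K} (hv : v ⬝ᵥ v = 1) :
    (Mᵀ * (1 - vecMulVec v v) * M).PosDef ↔ v ∉ Set.range M.mulVec := by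
  rw [transpose_mul_one_sub_vecMulVec_mul_eq_gram M hv, posDef_transpose_mul_self_iff,
    injective_mulVec_one_sub_vecMulVec_mul_iff hM hv]

section ShermanMorrison

variable [Field K] [Fintype n] [DecidableEq n] {A : Matrix n n K}

theorem one_sub_dotProduct_nonsing_inv_mulVec_ne_zero (hA : IsUnit A) {u w : n → K}
    (h : IsUnit (A - vecMulVec u w)) : 1 - w ⬝ᵥ (A⁻¹ *ᵥ u) ≠ 0 := by
  intro hc
  rw [sub_eq_zero] at hc
  have hker : (A - vecMulVec u w) *ᵥ (A⁻¹ *ᵥ u) = 0 := by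
    rw [sub_mulVec, mulVec_mulVec, mul_nonsing_inv A ((isUnit_iff_isUnit_det A).1 hA),
      one_mulVec, vecMulVec_mulVec, op_smul_eq_smul, ← hc, one_smul, sub_self]
  rw [mulVec_injective_iff_isUnit.2 h (hker.trans (mulVec_zero _).symm), dotProduct_zero] at hc
  exact one_ne_zero hc

theorem inv_sub_vecMulVec (hA : IsUnit A) (u w : n → K) (hc : 1 - w ⬝ᵥ (A⁻¹ *ᵥ u) ≠ 0) :
    (A - vecMulVec u w)⁻¹
      = A⁻¹ + (1 - w ⬝ᵥ (A⁻¹ *ᵥ u))⁻¹ • vecMulVec (A⁻¹ *ᵥ u) (w ᵥ* A⁻¹) := by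
  have hAA : A * A⁻¹ = 1 := mul_nonsing_inv A ((isUnit_iff_isUnit_det A).1 hA)
  refine inv_eq_right_inv ?_
  rw [Matrix.sub_mul, Matrix.mul_add, Matrix.mul_add, hAA, Matrix.mul_smul, mul_vecMulVec,
    mulVec_mulVec, hAA, one_mulVec, vecMulVec_mul, Matrix.mul_smul, vecMulVec_mul_vecMulVec,
    vecMulVec_smul]
  match_scalars
  · rfl
  · field_simp
    ring

theorem vecMul_nonsing_inv_of_isSymm (hA : A.IsSymm) (x : n → K) : x ᵥ* A⁻¹ = A⁻¹ *ᵥ x := by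
  rw [← mulVec_transpose, transpose_nonsing_inv, hA]

end ShermanMorrison

end Matrix

theorem dotProduct_self_eq_one_of_l2_eq_one {k : ℕ} {x : Fin k → ℝ} (h : l2 x = 1) :
    x ⬝ᵥ x = 1 := by
  rw [l2, Real.sqrt_eq_one] at h
  simpa only [dotProduct, sq] using h

theorem pinv_mulVec {m s : ℕ} (M : Matrix (Fin m) (Fin s) ℝ) (v : Fin m → ℝ) :
    pinv M *ᵥ v = (Mᵀ * M)⁻¹ *ᵥ (Mᵀ *ᵥ v) :=
  (mulVec_mulVec _ _ _).symm

theorem dotp_mul_pinv_mulVec {m s : ℕ} (M : Matrix (Fin m) (Fin s) ℝ) (v : Fin m → ℝ) :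
    dotp v ((M * pinv M) *ᵥ v) = (Mᵀ *ᵥ v) ⬝ᵥ (pinv M *ᵥ v) := by
  rw [← mulVec_mulVec, mulVec_transpose, ← dotProduct_mulVec]
  rfl

/-- Sherman–Morrison–Woodbury for W = Mᵀ(I − vvᵀ)M:
if M has rank s and ‖v‖₂ = 1, then W is invertible (in fact symmetric
positive definite) iff v ∉ range M, and in that case
W⁻¹ = (MᵀM)⁻¹ + (M†v)(M†v)ᵀ / (1 − vᵀMM†v), where M† = (MᵀM)⁻¹Mᵀ. -/
theorem stmt_0 {m s : ℕ} (M : Matrix (Fin m) (Fin s) ℝ) (v : Fin m → ℝ)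
    (hrank : M.rank = s) (hv : l2 v = 1) :
    ((IsUnit (Mᵀ * (1 - vecMulVec v v) * M) ∧ (Mᵀ * (1 - vecMulVec v v) * M).PosDef)
        ↔ v ∉ {w : Fin m → ℝ | ∃ x : Fin s → ℝ, M.mulVec x = w}) ∧
      (v ∉ {w : Fin m → ℝ | ∃ x : Fin s → ℝ, M.mulVec x = w} →
        (Mᵀ * (1 - vecMulVec v v) * M)⁻¹
          = (Mᵀ * M)⁻¹
            + (1 - dotp v ((M * pinv M).mulVec v))⁻¹ •
                vecMulVec ((pinv M).mulVec v) ((pinv M).mulVec v)) := by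
  have hM : Function.Injective M.mulVec := mulVec_injective_of_rank_eq_card (by simpa using hrank)
  have hW := posDef_transpose_mul_one_sub_vecMulVec_mul_iff hM
    (dotProduct_self_eq_one_of_l2_eq_one hv)
  refine ⟨⟨fun h => hW.1 h.2, fun h => ⟨(hW.2 h).isUnit, hW.2 h⟩⟩, fun h => ?_⟩
  have hA : IsUnit (Mᵀ * M) := (posDef_transpose_mul_self_iff.2 hM).isUnit
  have hWunit := (hW.2 h).isUnit
  rw [transpose_mul_one_sub_vecMulVec_mul] at hWunit ⊢
  rw [inv_sub_vecMulVec hA _ _ (one_sub_dotProduct_nonsing_inv_mulVec_ne_zero hA hWunit),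
    vecMul_nonsing_inv_of_isSymm (transpose_mul _ _), dotp_mul_pinv_mulVec, pinv_mulVec]
end

section
/- Let M ∈ ℝ^{m×s} have rank s and let v ∈ ℝ^m with ‖v‖₂ = 1 and v ∉ range(M). Set W := Mᵀ(I − vvᵀ)M, which is then symmetric positive definite. Then the largest eigenvalue of W⁻¹ satisfies λ_max(W⁻¹) ≤ 1/σ_min(M)² + ‖M†v‖₂² / (1 − vᵀM M†v), where M† := (MᵀM)⁻¹Mᵀ and σ_min(M) is the smallest singular value of M. -/
/-!
With `A = MᵀM` and `u = Mᵀv`, the matrix `W = Mᵀ(I - vvᵀ)M` is the rank-one downdate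
`A - uuᵀ`. Its quadratic form is `‖Mx - (vᵀMx) v‖²`, which vanishes only when `Mx` is a multiple
of `v`; as `v ∉ range M` and `M` is injective, `W` is positive definite.
By Sherman–Morrison, `W⁻¹ = A⁻¹ + ppᵀ / (1 - τ)` with `p = M†v` and `τ = uᵀp = vᵀMM†v`, and
`1 - τ = ‖v - Mp‖² > 0` is the squared least-squares residual of `v`.
So for a unit vector `x`, `xᵀW⁻¹x = xᵀA⁻¹x + (pᵀx)² / (1 - τ)`. The first term is at most
`1 / σ_min(M)²`: with `y = A⁻¹x` one has `xᵀy = ‖My‖² ≥ σ_min(M)² ‖y‖²` and `xᵀy ≤ ‖y‖`.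
The second is at most `‖p‖² / (1 - τ)` by Cauchy–Schwarz.
-/

open Matrix Filter Topology
open scoped BigOperators Classical

/-- smallest singular value of a full-column-rank matrix, characterized as the
minimum of ‖Mx‖₂ over unit vectors x. -/
noncomputable def sigmaMin {m s : ℕ} (M : Matrix (Fin m) (Fin s) ℝ) : ℝ :=
  sInf {r | ∃ x : Fin s → ℝ, l2 x = 1 ∧ r = l2 (M.mulVec x)}

/-- largest eigenvalue of a symmetric matrix, via the Rayleigh quotient. -/
noncomputable def lambdaMax {s : ℕ} (S : Matrix (Fin s) (Fin s) ℝ) : ℝ :=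
  sSup {r | ∃ x : Fin s → ℝ, l2 x = 1 ∧ r = dotp x (S.mulVec x)}

lemma Matrix.injective_mulVec_of_rank_eq {m s : ℕ} {K : Type*} [Field K]
    {M : Matrix (Fin m) (Fin s) K} (hrank : M.rank = s) : Function.Injective M.mulVec := by
  have h := LinearMap.finrank_range_add_finrank_ker M.mulVecLin
  rw [show Module.finrank K (LinearMap.range M.mulVecLin) = s from hrank,
    Module.finrank_fin_fun, add_eq_left, Submodule.finrank_eq_zero] at h
  exact LinearMap.ker_eq_bot.1 h

lemma Matrix.dotProduct_self_pos {n : Type*} [Fintype n] {x : n → ℝ} (hx : x ≠ 0) :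
    0 < x ⬝ᵥ x := by
  simpa using dotProduct_star_self_pos_iff.2 hx

section Quadratic

variable {m n R : Type*} [Fintype m] [Fintype n] [CommRing R]

lemma Matrix.dotProduct_transpose_mul_mul_mulVec (M : Matrix m n R) (B : Matrix m m R)
    (x : n → R) : x ⬝ᵥ (Mᵀ * B * M) *ᵥ x = (M *ᵥ x) ⬝ᵥ B *ᵥ (M *ᵥ x) := by
  rw [← mulVec_mulVec, ← mulVec_mulVec, dotProduct_mulVec, vecMul_transpose]

lemma Matrix.dotProduct_one_sub_vecMulVec_mulVec [DecidableEq m] {v : m → R}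
    (hv : v ⬝ᵥ v = 1) (y : m → R) :
    y ⬝ᵥ (1 - vecMulVec v v) *ᵥ y = (y - (v ⬝ᵥ y) • v) ⬝ᵥ (y - (v ⬝ᵥ y) • v) := by
  simp only [sub_mulVec, one_mulVec, vecMulVec_mulVec, dotProduct_sub, sub_dotProduct,
    dotProduct_smul, smul_dotProduct, hv, dotProduct_comm y v]
  simp only [smul_eq_mul, MulOpposite.smul_eq_mul_unop, MulOpposite.unop_op]
  ring

lemma Matrix.dotProduct_vecMulVec_self_mulVec (p x : n → R) :
    x ⬝ᵥ vecMulVec p p *ᵥ x = (p ⬝ᵥ x) ^ 2 := by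
  simp [vecMulVec_mulVec, dotProduct_comm x p, sq]

end Quadratic

theorem Matrix.inv_sub_vecMulVec_s1 {n K : Type*} [Fintype n] [DecidableEq n] [Field K]
    {A : Matrix n n K} (hA : IsUnit A.det) (u w : n → K) (h : w ⬝ᵥ A⁻¹ *ᵥ u ≠ 1) :
    (A - vecMulVec u w)⁻¹
      = A⁻¹ + (1 - w ⬝ᵥ A⁻¹ *ᵥ u)⁻¹ • vecMulVec (A⁻¹ *ᵥ u) (w ᵥ* A⁻¹) := by
  refine inv_eq_right_inv ?_
  set c := (1 - w ⬝ᵥ A⁻¹ *ᵥ u)⁻¹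
  have hc : c * (1 - w ⬝ᵥ A⁻¹ *ᵥ u) = 1 := inv_mul_cancel₀ (sub_ne_zero.2 (Ne.symm h))
  rw [Matrix.sub_mul, Matrix.mul_add, Matrix.mul_add, mul_nonsing_inv A hA, Matrix.mul_smul,
    Matrix.mul_smul, mul_vecMulVec, mulVec_mulVec, mul_nonsing_inv A hA, one_mulVec,
    vecMulVec_mul, vecMulVec_mul_vecMulVec, vecMulVec_smul, smul_smul]
  linear_combination (norm := module) hc • vecMulVec u (w ᵥ* A⁻¹)

theorem Matrix.posDef_transpose_mul_one_sub_vecMulVec_mul {m n : Type*} [Fintype m] [Fintype n]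
    [DecidableEq m] {M : Matrix m n ℝ} {v : m → ℝ} (hM : Function.Injective M.mulVec)
    (hv : v ⬝ᵥ v = 1) (hvM : ∀ x, M *ᵥ x ≠ v) : (Mᵀ * (1 - vecMulVec v v) * M).PosDef := by
  have hP : (1 - vecMulVec v v).IsHermitian :=
    isHermitian_one.sub (by simpa using (posSemidef_vecMulVec_self_star v).isHermitian)
  refine .of_dotProduct_mulVec_pos (by simpa using isHermitian_conjTranspose_mul_mul M hP)
    fun x hx => ?_
  rw [star_trivial, dotProduct_transpose_mul_mul_mulVec, dotProduct_one_sub_vecMulVec_mulVec hv]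
  refine dotProduct_self_pos fun h => ?_
  set c := v ⬝ᵥ M *ᵥ x
  have hMx : M *ᵥ x = c • v := sub_eq_zero.1 h
  have hc : c ≠ 0 := fun hc => hx (hM (by rw [hMx, hc, zero_smul, mulVec_zero]))
  exact hvM (c⁻¹ • x) (by rw [mulVec_smul, hMx, inv_smul_smul₀ hc])

section EuclideanNorm

variable {k : ℕ}

lemma dotp_eq_dotProduct (x y : Fin k → ℝ) : dotp x y = x ⬝ᵥ y := rfl

lemma l2_eq_sqrt_dotProduct (x : Fin k → ℝ) : l2 x = √(x ⬝ᵥ x) := by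
  simp only [l2, dotProduct, sq]

lemma l2_sq (x : Fin k → ℝ) : l2 x ^ 2 = x ⬝ᵥ x := by
  rw [l2_eq_sqrt_dotProduct, Real.sq_sqrt (by simpa using dotProduct_star_self_nonneg x)]

lemma l2_nonneg (x : Fin k → ℝ) : 0 ≤ l2 x := Real.sqrt_nonneg _

@[simp]
lemma l2_zero : l2 (0 : Fin k → ℝ) = 0 := by simp [l2]

lemma l2_pos {x : Fin k → ℝ} (hx : x ≠ 0) : 0 < l2 x := by
  rw [l2_eq_sqrt_dotProduct]
  exact Real.sqrt_pos.2 (dotProduct_self_pos hx)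

lemma l2_smul (a : ℝ) (x : Fin k → ℝ) : l2 (a • x) = |a| * l2 x := by
  rw [l2_eq_sqrt_dotProduct, l2_eq_sqrt_dotProduct, dotProduct_smul, smul_dotProduct,
    smul_eq_mul, smul_eq_mul, ← mul_assoc, Real.sqrt_mul (mul_self_nonneg a),
    Real.sqrt_mul_self_eq_abs]

lemma abs_le_l2 (x : Fin k → ℝ) (i : Fin k) : |x i| ≤ l2 x :=
  Real.abs_le_sqrt (Finset.single_le_sum (fun j _ => sq_nonneg (x j)) (Finset.mem_univ i))

lemma continuous_l2 : Continuous (l2 : (Fin k → ℝ) → ℝ) := by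
  unfold l2
  fun_prop

lemma isCompact_l2_eq_one : IsCompact {x : Fin k → ℝ | l2 x = 1} := by
  refine Metric.isCompact_of_isClosed_isBounded (isClosed_eq continuous_l2 continuous_const)
    ((Metric.isBounded_closedBall (x := 0) (r := 1)).subset fun x hx => ?_)
  rw [Metric.mem_closedBall, dist_zero_right]
  exact (pi_norm_le_iff_of_nonneg zero_le_one).2 fun i =>
    (Real.norm_eq_abs _).trans_le ((abs_le_l2 x i).trans_eq hx)

lemma dotProduct_sq_le (x y : Fin k → ℝ) : (x ⬝ᵥ y) ^ 2 ≤ l2 x ^ 2 * l2 y ^ 2 := by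
  rw [l2_sq, l2_sq]
  simpa only [dotProduct, sq] using Finset.sum_mul_sq_le_sq_mul_sq Finset.univ x y

lemma dotProduct_le_l2_mul_l2 (x y : Fin k → ℝ) : x ⬝ᵥ y ≤ l2 x * l2 y :=
  (abs_le_of_sq_le_sq (by rw [mul_pow]; exact dotProduct_sq_le x y)
    (mul_nonneg (l2_nonneg x) (l2_nonneg y))).trans' (le_abs_self _)

end EuclideanNorm

section SingularValue

variable {m s : ℕ} (M : Matrix (Fin m) (Fin s) ℝ)

lemma sigmaMin_mul_l2_le (z : Fin s → ℝ) : sigmaMin M * l2 z ≤ l2 (M *ᵥ z) := by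
  rcases eq_or_ne z 0 with rfl | hz
  · simp
  have hz' : 0 < l2 z := l2_pos hz
  have hunit : l2 ((l2 z)⁻¹ • z) = 1 := by
    rw [l2_smul, abs_of_pos (inv_pos.2 hz'), inv_mul_cancel₀ hz'.ne']
  have hle : sigmaMin M ≤ l2 (M *ᵥ ((l2 z)⁻¹ • z)) :=
    csInf_le ⟨0, by rintro r ⟨x, -, rfl⟩; exact l2_nonneg _⟩ ⟨_, hunit, rfl⟩
  rw [mulVec_smul, l2_smul, abs_of_pos (inv_pos.2 hz'), le_inv_mul_iff₀ hz'] at hle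
  rwa [mul_comm]

variable {M}

lemma sigmaMin_pos (hM : Function.Injective M.mulVec)
    (hne : {x : Fin s → ℝ | l2 x = 1}.Nonempty) : 0 < sigmaMin M := by
  obtain ⟨x₀, hx₀, hmin⟩ := isCompact_l2_eq_one.exists_isMinOn hne
    (continuous_l2.comp (continuous_const.matrix_mulVec continuous_id)).continuousOn
  have hx₀ne : x₀ ≠ 0 := by rintro rfl; simp at hx₀
  have hMx₀ : M *ᵥ x₀ ≠ 0 := fun h => hx₀ne (hM (h.trans (mulVec_zero M).symm))
  refine (l2_pos hMx₀).trans_le (le_csInf ⟨_, x₀, hx₀, rfl⟩ ?_)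
  rintro r ⟨x, hx, rfl⟩
  exact hmin hx

end SingularValue

lemma lambdaMax_le {s : ℕ} {S : Matrix (Fin s) (Fin s) ℝ} {c : ℝ} (hc : 0 ≤ c)
    (h : ∀ x, l2 x = 1 → dotp x (S *ᵥ x) ≤ c) : lambdaMax S ≤ c :=
  Real.sSup_le (by rintro r ⟨x, hx, rfl⟩; exact h x hx) hc

section LeastSquares

variable {m s : ℕ} {M : Matrix (Fin m) (Fin s) ℝ}

lemma transpose_mulVec_sub_mulVec_pinv (hA : IsUnit (Mᵀ * M).det) (v : Fin m → ℝ) :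
    Mᵀ *ᵥ (v - M *ᵥ (pinv M *ᵥ v)) = 0 := by
  rw [mulVec_sub, mulVec_mulVec, mulVec_mulVec, pinv, ← Matrix.mul_assoc,
    mul_nonsing_inv _ hA, Matrix.one_mul, sub_self]

lemma dotProduct_mul_pinv_mulVec_lt (hA : IsUnit (Mᵀ * M).det) {v : Fin m → ℝ}
    (hvM : ∀ x, M *ᵥ x ≠ v) : v ⬝ᵥ (M * pinv M) *ᵥ v < v ⬝ᵥ v := by
  set r := v - M *ᵥ (pinv M *ᵥ v)
  have hr : r ⬝ᵥ r = v ⬝ᵥ v - v ⬝ᵥ (M * pinv M) *ᵥ v := by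
    calc r ⬝ᵥ r = r ⬝ᵥ v - (Mᵀ *ᵥ r) ⬝ᵥ pinv M *ᵥ v := by
          rw [dotProduct_sub r, dotProduct_mulVec, mulVec_transpose]
      _ = v ⬝ᵥ v - v ⬝ᵥ (M * pinv M) *ᵥ v := by
          rw [transpose_mulVec_sub_mulVec_pinv hA, zero_dotProduct, sub_zero, sub_dotProduct,
            mulVec_mulVec, dotProduct_comm ((M * pinv M) *ᵥ v)]
  have hr0 : r ≠ 0 := fun h => hvM _ (sub_eq_zero.1 h).symm
  linarith [dotProduct_self_pos hr0]

lemma inv_transpose_mul_one_sub_vecMulVec_mul (hA : IsUnit (Mᵀ * M).det) {v : Fin m → ℝ}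
    (hτ : v ⬝ᵥ (M * pinv M) *ᵥ v ≠ 1) :
    (Mᵀ * (1 - vecMulVec v v) * M)⁻¹ = (Mᵀ * M)⁻¹
      + (1 - v ⬝ᵥ (M * pinv M) *ᵥ v)⁻¹ • vecMulVec (pinv M *ᵥ v) (pinv M *ᵥ v) := by
  have hW : Mᵀ * (1 - vecMulVec v v) * M = Mᵀ * M - vecMulVec (Mᵀ *ᵥ v) (Mᵀ *ᵥ v) := by
    rw [Matrix.mul_sub, Matrix.mul_one, Matrix.sub_mul, mul_vecMulVec, vecMulVec_mul,
      ← mulVec_transpose]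
  have hp : (Mᵀ * M)⁻¹ *ᵥ (Mᵀ *ᵥ v) = pinv M *ᵥ v := by rw [pinv, mulVec_mulVec]
  have hq : (Mᵀ *ᵥ v) ᵥ* (Mᵀ * M)⁻¹ = pinv M *ᵥ v := by
    rw [← mulVec_transpose, transpose_nonsing_inv, transpose_mul, transpose_transpose, hp]
  have hτ' : (Mᵀ *ᵥ v) ⬝ᵥ (Mᵀ * M)⁻¹ *ᵥ (Mᵀ *ᵥ v) = v ⬝ᵥ (M * pinv M) *ᵥ v := by
    rw [hp, ← mulVec_mulVec, dotProduct_mulVec v M, ← mulVec_transpose]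
  rw [hW, inv_sub_vecMulVec_s1 hA _ _ (hτ' ▸ hτ), hτ', hp, hq]

lemma dotProduct_inv_transpose_mul_self_mulVec_le (hA : IsUnit (Mᵀ * M).det) {σ : ℝ}
    (hσ : 0 < σ) (hMσ : ∀ z, σ * l2 z ≤ l2 (M *ᵥ z)) (x : Fin s → ℝ) :
    x ⬝ᵥ (Mᵀ * M)⁻¹ *ᵥ x ≤ l2 x ^ 2 / σ ^ 2 := by
  set y := (Mᵀ * M)⁻¹ *ᵥ x
  have hx : (Mᵀ * M) *ᵥ y = x := by rw [mulVec_mulVec, mul_nonsing_inv _ hA, one_mulVec]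
  have hxy : x ⬝ᵥ y = l2 (M *ᵥ y) ^ 2 := by
    rw [← hx, dotProduct_comm, ← mulVec_mulVec, dotProduct_mulVec, vecMul_transpose, l2_sq]
  have hlow : (σ * l2 y) ^ 2 ≤ x ⬝ᵥ y :=
    hxy ▸ pow_le_pow_left₀ (mul_nonneg hσ.le (l2_nonneg y)) (hMσ y) 2
  have hup : x ⬝ᵥ y ≤ l2 x * l2 y := dotProduct_le_l2_mul_l2 x y
  rw [le_div_iff₀ (by positivity)]
  -- `σ²‖y‖² ≤ ‖x‖‖y‖` forces `σ²‖y‖ ≤ ‖x‖`, so `σ² xᵀy ≤ σ²‖x‖‖y‖ ≤ ‖x‖²`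
  nlinarith [sq_nonneg (σ ^ 2 * l2 y - l2 x), mul_le_mul_of_nonneg_left (hlow.trans hup)
    (sq_nonneg σ), mul_le_mul_of_nonneg_left hup (sq_nonneg σ)]

end LeastSquares

/-- if M has rank s, ‖v‖₂ = 1 and v ∉ range M, then
W := Mᵀ(I − vvᵀ)M is symmetric positive definite and
λ_max(W⁻¹) ≤ 1/σ_min(M)² + ‖M†v‖₂²/(1 − vᵀMM†v). -/
theorem stmt_1 {m s : ℕ} (M : Matrix (Fin m) (Fin s) ℝ) (v : Fin m → ℝ)
    (hrank : M.rank = s) (hv : l2 v = 1)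
    (hvrge : v ∉ {w : Fin m → ℝ | ∃ x : Fin s → ℝ, M.mulVec x = w}) :
    (Mᵀ * (1 - vecMulVec v v) * M).PosDef ∧
      lambdaMax ((Mᵀ * (1 - vecMulVec v v) * M)⁻¹)
        ≤ 1 / sigmaMin M ^ 2
          + l2 ((pinv M).mulVec v) ^ 2 / (1 - dotp v ((M * pinv M).mulVec v)) := by
  have hvv : v ⬝ᵥ v = 1 := by rw [← l2_sq, hv, one_pow]
  have hvM : ∀ x, M *ᵥ x ≠ v := fun x h => hvrge ⟨x, h⟩
  have hM := injective_mulVec_of_rank_eq hrank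
  have hA : IsUnit (Mᵀ * M).det := by
    simpa using (PosDef.conjTranspose_mul_self M hM).det_pos.ne'.isUnit
  have hτ : v ⬝ᵥ (M * pinv M) *ᵥ v < 1 := hvv ▸ dotProduct_mul_pinv_mulVec_lt hA hvM
  refine ⟨posDef_transpose_mul_one_sub_vecMulVec_mul hM hvv hvM, ?_⟩
  rw [inv_transpose_mul_one_sub_vecMulVec_mul hA hτ.ne, dotp_eq_dotProduct]
  set p := pinv M *ᵥ v
  set τ := v ⬝ᵥ (M * pinv M) *ᵥ v
  have h1τ : 0 < 1 - τ := sub_pos.2 hτ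
  refine lambdaMax_le (by positivity) fun x hx => ?_
  have hσ := sigmaMin_pos hM ⟨x, hx⟩
  calc dotp x (((Mᵀ * M)⁻¹ + (1 - τ)⁻¹ • vecMulVec p p) *ᵥ x)
      = x ⬝ᵥ (Mᵀ * M)⁻¹ *ᵥ x + (1 - τ)⁻¹ * (p ⬝ᵥ x) ^ 2 := by
        rw [dotp_eq_dotProduct, add_mulVec, smul_mulVec, dotProduct_add, dotProduct_smul,
          dotProduct_vecMulVec_self_mulVec, smul_eq_mul]
    _ ≤ 1 / sigmaMin M ^ 2 + l2 p ^ 2 / (1 - τ) := by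
        gcongr
        · simpa [hx] using dotProduct_inv_transpose_mul_self_mulVec_le hA hσ
            (sigmaMin_mul_l2_le M) x
        · rw [div_eq_inv_mul]
          exact mul_le_mul_of_nonneg_left (by simpa [hx] using dotProduct_sq_le p x)
            (inv_nonneg.2 h1τ.le)
end

section
/- Let M ∈ ℝ^{m×s} and let v ∈ ℝ^m with ‖v‖₂ = 1. Then the following are equivalent: (i) ker M = {0} and v ∉ range(M); (ii) ker(Mᵀ(I − vvᵀ)M) = {0}; (iii) ker((I − vvᵀ)M) = {0}, where I is the m×m identity matrix. -/
open Matrix Filter Topology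
open scoped BigOperators Classical

/-- for M ∈ ℝ^{m×s} and ‖v‖₂ = 1, the following are
equivalent: (i) ker M = {0} and v ∉ range M; (ii) ker(Mᵀ(I − vvᵀ)M) = {0};
(iii) ker((I − vvᵀ)M) = {0}. -/
theorem stmt_2 {m s : ℕ} (M : Matrix (Fin m) (Fin s) ℝ) (v : Fin m → ℝ)
    (hv : l2 v = 1) :
    (((∀ x : Fin s → ℝ, M.mulVec x = 0 → x = 0) ∧
        v ∉ {w : Fin m → ℝ | ∃ x : Fin s → ℝ, M.mulVec x = w})
      ↔ (∀ x : Fin s → ℝ, (Mᵀ * (1 - vecMulVec v v) * M).mulVec x = 0 → x = 0)) ∧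
    ((∀ x : Fin s → ℝ, (Mᵀ * (1 - vecMulVec v v) * M).mulVec x = 0 → x = 0)
      ↔ (∀ x : Fin s → ℝ, ((1 - vecMulVec v v) * M).mulVec x = 0 → x = 0)) := by
  -- v ⬝ᵥ v = 1
  have hvv : v ⬝ᵥ v = 1 := by
    have h1 : Real.sqrt (∑ i, (v i) ^ 2) = 1 := hv
    have h2 : (∑ i, (v i) ^ 2) = 1 := by
      have hnn : 0 ≤ ∑ i, (v i) ^ 2 := Finset.sum_nonneg fun i _ => sq_nonneg _
      nlinarith [Real.sq_sqrt hnn, Real.sqrt_nonneg (∑ i, (v i) ^ 2)]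
    simpa [dotProduct, sq] using h2
  set P : Matrix (Fin m) (Fin m) ℝ := 1 - vecMulVec v v with hP
  -- action of P
  have hPw : ∀ w : Fin m → ℝ, P.mulVec w = w - (v ⬝ᵥ w) • v := by
    intro w
    have hvvw : (vecMulVec v v).mulVec w = (v ⬝ᵥ w) • v := by
      funext j
      simp [mulVec, vecMulVec_apply, dotProduct, Finset.mul_sum, mul_comm,
        mul_assoc, mul_left_comm]
    rw [hP, sub_mulVec, one_mulVec, hvvw]
  -- core: P w ⬝ᵥ P w = w ⬝ᵥ P w
  have hkey : ∀ w : Fin m → ℝ, (P.mulVec w) ⬝ᵥ (P.mulVec w) = w ⬝ᵥ (P.mulVec w) := by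
    intro w
    rw [hPw]
    have hc : v ⬝ᵥ w = w ⬝ᵥ v := dotProduct_comm v w
    simp [sub_dotProduct, dotProduct_sub, smul_dotProduct, dotProduct_smul, hvv, hc]
  -- (iii) ⟺ (ii)
  have h32 : (∀ x : Fin s → ℝ, (Mᵀ * P * M).mulVec x = 0 → x = 0)
      ↔ (∀ x : Fin s → ℝ, (P * M).mulVec x = 0 → x = 0) := by
    constructor
    · intro h x hx
      apply h
      rw [← mulVec_mulVec] at hx ⊢
      rw [← mulVec_mulVec, hx, mulVec_zero]
    · intro h x hx
      apply h
      have h0 : x ⬝ᵥ (Mᵀ * P * M).mulVec x = 0 := by rw [hx, dotProduct_zero]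
      have h1 : x ⬝ᵥ (Mᵀ * P * M).mulVec x
          = (M.mulVec x) ⬝ᵥ (P.mulVec (M.mulVec x)) := by
        rw [Matrix.mul_assoc Mᵀ P M, ← mulVec_mulVec,
          dotProduct_mulVec, vecMul_transpose, ← mulVec_mulVec]
      have h2 : (P.mulVec (M.mulVec x)) ⬝ᵥ (P.mulVec (M.mulVec x)) = 0 := by
        rw [hkey, ← h1, h0]
      rw [← mulVec_mulVec]
      exact dotProduct_self_eq_zero.mp h2
  constructor
  · -- (i) ⟺ (ii): via (iii)
    rw [h32]
    constructor
    · rintro ⟨hker, hrange⟩ x hx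
      have hx' : P.mulVec (M.mulVec x) = 0 := by rwa [mulVec_mulVec]
      rw [hPw] at hx'
      set c := v ⬝ᵥ M.mulVec x with hc
      have hMx : M.mulVec x = c • v := sub_eq_zero.mp hx'
      by_cases hc0 : c = 0
      · exact hker x (by rw [hMx, hc0, zero_smul])
      · exfalso
        apply hrange
        refine ⟨c⁻¹ • x, ?_⟩
        rw [mulVec_smul, hMx, smul_smul, inv_mul_cancel₀ hc0, one_smul]
    · intro h3
      constructor
      · intro x hx
        apply h3
        rw [← mulVec_mulVec, hx, mulVec_zero]
      · rintro ⟨x, hx⟩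
        have hPv : P.mulVec v = 0 := by rw [hPw, hvv, one_smul, sub_self]
        have : x = 0 := h3 x (by rw [← mulVec_mulVec, hx, hPv])
        rw [this, mulVec_zero] at hx
        rw [← hx] at hvv
        simp at hvv
  · exact h32
end

section
/- Let A ∈ ℝ^{m×n}, b ∈ ℝ^m, λ > 0, and let x̄ be a solution of the SR-LASSO satisfying the intermediate assumption: Ax̄ ≠ b, and with ȳ := (b − Ax̄)/‖Ax̄ − b‖₂ and J := {i ∈ {1,…,n} : |Aᵢᵀȳ| = λ}, one has ker A_J = {0} and b ∉ range(A_J). Then the weak assumption holds at x̄, i.e., with I := supp(x̄): (i) ker A_I = {0} and b ∉ range(A_I); (ii) there exists z ∈ ℝ^m with ⟨ȳ, z⟩ = 0 and A_Iᵀz = 0 such that ‖A_{I^C}ᵀ(ȳ + z)‖_∞ < λ. -/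
open Matrix Filter Topology
open scoped BigOperators Classical

/-- The SR-LASSO objective f_{A,b,λ}(x) := ‖Ax − b‖₂ + λ‖x‖₁. -/
noncomputable def srObj {m n : ℕ} (A : Matrix (Fin m) (Fin n) ℝ) (b : Fin m → ℝ)
    (lam : ℝ) (x : Fin n → ℝ) : ℝ := l2 (A.mulVec x - b) + lam * l1 x

/-- x is a solution of the SR-LASSO with data (A, b, λ). -/
def IsSol {m n : ℕ} (A : Matrix (Fin m) (Fin n) ℝ) (b : Fin m → ℝ) (lam : ℝ)
    (x : Fin n → ℝ) : Prop := ∀ w : Fin n → ℝ, srObj A b lam x ≤ srObj A b lam w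

/-- y is feasible for the SR-LASSO dual: ‖Aᵀy‖_∞ ≤ λ and ‖y‖₂ ≤ 1. -/
noncomputable def DualFeas {m n : ℕ} (A : Matrix (Fin m) (Fin n) ℝ) (lam : ℝ)
    (y : Fin m → ℝ) : Prop := linf (Aᵀ.mulVec y) ≤ lam ∧ l2 y ≤ 1

/-- y is a solution of the SR-LASSO dual: it is feasible and maximizes ⟨b, ·⟩
over the feasible set. -/
noncomputable def IsDualSol {m n : ℕ} (A : Matrix (Fin m) (Fin n) ℝ) (b : Fin m → ℝ)
    (lam : ℝ) (y : Fin m → ℝ) : Prop :=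
  DualFeas A lam y ∧ ∀ y' : Fin m → ℝ, DualFeas A lam y' → dotp b y' ≤ dotp b y

/-!
Optimality of `x̄` along each coordinate line `t ↦ x̄ + t eᵢ` gives the subgradient conditions
`|Aᵢᵀȳ| ≤ λ`, with equality on `supp x̄` (the residual norm is differentiable at `x̄` because
`Ax̄ ≠ b`). Hence `I ⊆ J`, and (i) is inherited from `J`.

For (ii), the hypotheses on `J` make `ȳ` and the columns of `A_J` linearly independent: a relation
`β ȳ + A_J u = 0` with `β ≠ 0` would put `b` in the range of `A_J`. By the Fredholm alternative we
can therefore solve `⟨ȳ, z⟩ = 0`, `Aᵢᵀz = 0` for `i ∈ I` and `Aᵢᵀz = -Aᵢᵀȳ` for `i ∈ J \ I`.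
A small positive multiple `t z` then shrinks `|Aᵢᵀȳ| = λ` to `(1 - t) λ` on `J \ I` while keeping
the strict inequalities off `J`.
-/

theorem Matrix.exists_mulVec_eq_of_forall_vecMul_eq_zero {ι κ K : Type*} [Field K] [Fintype ι]
    [Fintype κ] (M : Matrix ι κ K) (d : ι → K) (h : ∀ μ, μ ᵥ* M = 0 → d ⬝ᵥ μ = 0) :
    ∃ z, M *ᵥ z = d := by
  classical
  obtain ⟨ψ, hψ⟩ : dotProductEquiv K ι d ∈ LinearMap.range M.vecMulLinear.dualMap := by
    rw [LinearMap.range_dualMap_eq_dualAnnihilator_ker, Submodule.mem_dualAnnihilator]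
    exact h
  obtain ⟨z, rfl⟩ := (dotProductEquiv K κ).surjective ψ
  refine ⟨z, funext fun p => ?_⟩
  have := LinearMap.congr_fun hψ (Pi.single p 1)
  simp only [LinearMap.dualMap_apply, Matrix.vecMulLinear_apply, single_one_vecMul,
    dotProductEquiv_apply_apply, dotProduct_single, mul_one] at this
  rw [← this, dotProduct_comm]
  rfl

theorem exists_dotProduct_eq_zero_and_transpose_mulVec_eq {ι κ K : Type*} [Field K] [Fintype ι]
    [Fintype κ] (A : Matrix κ ι K) (y : κ → K) (p : ι → Prop)
    (hind : ∀ (β : K) (u : ι → K), (∀ i, ¬ p i → u i = 0) → β • y + A *ᵥ u = 0 → u = 0)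
    (d : ι → K) : ∃ z, y ⬝ᵥ z = 0 ∧ ∀ i, p i → (Aᵀ *ᵥ z) i = d i := by
  classical
  let M : Matrix (Option ι) κ K := Matrix.of fun q => q.elim y fun i => if p i then Aᵀ i else 0
  let D : Option ι → K := fun q => q.elim 0 fun i => if p i then d i else 0
  obtain ⟨z, hz⟩ := M.exists_mulVec_eq_of_forall_vecMul_eq_zero D fun μ hμ => by
    let u : ι → K := fun i => if p i then μ (some i) else 0
    have hu : u = 0 := by
      refine hind (μ none) u (fun i hi => if_neg hi) (funext fun j => ?_)
      have := congrFun hμ j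
      simp only [vecMul, dotProduct, Fintype.sum_option] at this
      simpa [M, u, mulVec, dotProduct, mul_comm, ite_apply, mul_ite] using this
    simp only [dotProduct, Fintype.sum_option, D, Option.elim, zero_mul, zero_add, ite_mul]
    refine Finset.sum_eq_zero fun i _ => ?_
    have hui : (if p i then μ (some i) else 0) = 0 := congrFun hu i
    split_ifs at hui ⊢ <;> simp [hui]
  refine ⟨z, congrFun hz none, fun i hi => ?_⟩
  simpa [M, D, hi, mulVec] using congrFun hz (some i)

theorem eq_zero_of_smul_residual_add_mulVec_eq_zero {ι κ K : Type*} [Field K] [Fintype ι]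
    {A : Matrix κ ι K} {b : κ → K} {x : ι → K} {p : ι → Prop} (hx : ∀ i, ¬ p i → x i = 0)
    (hker : ∀ u : ι → K, (∀ i, ¬ p i → u i = 0) → A *ᵥ u = 0 → u = 0)
    (hrge : ¬ ∃ u : ι → K, (∀ i, ¬ p i → u i = 0) ∧ A *ᵥ u = b) (c β : K) {u : ι → K}
    (hu : ∀ i, ¬ p i → u i = 0) (h : β • c • (b - A *ᵥ x) + A *ᵥ u = 0) : u = 0 := by
  rw [smul_smul] at h
  by_cases hβc : β * c = 0
  · rw [hβc, zero_smul, zero_add] at h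
    exact hker u hu h
  · refine (hrge ⟨x - (β * c)⁻¹ • u, fun i hi => by simp [hx i hi, hu i hi], ?_⟩).elim
    rw [mulVec_sub, mulVec_smul, eq_neg_of_add_eq_zero_right h, smul_neg, smul_smul,
      inv_mul_cancel₀ hβc, one_smul]
    abel

theorem exists_pos_forall_abs_add_mul_lt {ι : Type*} [Finite ι] {p : ι → Prop} {g h : ι → ℝ}
    {lam : ℝ} (hlam : 0 < lam) (hgh : ∀ i, p i → |g i| < lam ∨ (|g i| = lam ∧ h i = -g i)) :
    ∃ t > 0, ∀ i, p i → |g i + t * h i| < lam := by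
  have hev : ∀ i, ∀ᶠ t in 𝓝[>] (0 : ℝ), p i → |g i + t * h i| < lam := by
    intro i
    by_cases hi : p i
    · rcases hgh i hi with hlt | ⟨heq, hhi⟩
      · have hcont : Tendsto (fun t : ℝ => |g i + t * h i|) (𝓝[>] 0) (𝓝 |g i|) := by
          have hc : Continuous fun t : ℝ => |g i + t * h i| := by fun_prop
          exact (hc.tendsto' 0 _ (by simp)).mono_left nhdsWithin_le_nhds
        exact (hcont.eventually_lt_const hlt).mono fun t ht _ => ht
      · filter_upwards [Ioo_mem_nhdsGT one_pos] with t ⟨ht0, ht1⟩ _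
        rw [hhi, show g i + t * -g i = (1 - t) * g i by ring, abs_mul, abs_of_pos (sub_pos.2 ht1),
          heq]
        nlinarith
    · exact Filter.Eventually.of_forall fun _ hi' => absurd hi' hi
  exact ((eventually_all.2 hev).and self_mem_nhdsWithin).exists.imp fun t ht => ⟨ht.2, ht.1⟩

theorem abs_le_of_hasDerivAt_of_forall_le {N : ℝ → ℝ} {c lam x : ℝ} (hN : HasDerivAt N c 0)
    (hlam : 0 ≤ lam) (h : ∀ t, N 0 + lam * |x| ≤ N t + lam * |x + t|) : |c| ≤ lam := by
  have hdrop : ∀ t, N 0 - N t ≤ lam * |t| := fun t => by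
    have := mul_le_mul_of_nonneg_left (abs_add_le x t) hlam
    linarith [h t]
  rw [abs_le]
  constructor
  · refine ge_of_tendsto hN.tendsto_slope_zero_right ?_
    filter_upwards [self_mem_nhdsWithin] with t (ht : 0 < t)
    rw [zero_add, smul_eq_mul, inv_mul_eq_div, le_div_iff₀ ht]
    linarith [abs_of_pos ht ▸ hdrop t]
  · refine le_of_tendsto hN.tendsto_slope_zero_left ?_
    filter_upwards [self_mem_nhdsWithin] with t (ht : t < 0)
    rw [zero_add, smul_eq_mul, inv_mul_eq_div, div_le_iff_of_neg ht]
    linarith [abs_of_neg ht ▸ hdrop t]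

theorem abs_eq_of_hasDerivAt_of_forall_le {N : ℝ → ℝ} {c lam x : ℝ} (hN : HasDerivAt N c 0)
    (hlam : 0 ≤ lam) (hx : x ≠ 0) (h : ∀ t, N 0 + lam * |x| ≤ N t + lam * |x + t|) :
    |c| = lam := by
  have habs : HasDerivAt (fun t => |x + t|) (SignType.sign x : ℝ) 0 := by
    have := (hasDerivAt_abs (by simpa using hx)).comp (0 : ℝ) ((hasDerivAt_id' (0 : ℝ)).const_add x)
    simp only [add_zero, mul_one, Function.comp_def] at this
    exact this
  have hmin : IsLocalMin (fun t => N t + lam * |x + t|) 0 :=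
    Filter.Eventually.of_forall fun t => by simpa using h t
  have hcrit := hmin.hasDerivAt_eq_zero (hN.add (habs.const_mul lam))
  rw [eq_neg_of_add_eq_zero_left hcrit, abs_neg, abs_mul, abs_of_nonneg hlam]
  rcases hx.lt_or_gt with hx | hx <;> simp [hx]

theorem l1_add_single {k : ℕ} (x : Fin k → ℝ) (i : Fin k) (t : ℝ) :
    l1 (x + Pi.single i t) + |x i| = l1 x + |x i + t| := by
  unfold l1
  rw [← Finset.add_sum_erase _ _ (Finset.mem_univ i),
    ← Finset.add_sum_erase _ (fun j => |x j|) (Finset.mem_univ i),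
    Finset.sum_congr rfl fun j hj => by
      rw [Pi.add_apply, Pi.single_eq_of_ne (Finset.ne_of_mem_erase hj), add_zero]]
  simp only [Pi.add_apply, Pi.single_eq_same]
  ring

theorem hasDerivAt_l2_add_smul {k : ℕ} {r : Fin k → ℝ} (hr : r ≠ 0) (a : Fin k → ℝ) :
    HasDerivAt (fun t : ℝ => l2 (r + t • a)) ((l2 r)⁻¹ * (r ⬝ᵥ a)) 0 := by
  have hsq : HasDerivAt (fun t : ℝ => ∑ j, (r + t • a) j ^ 2) (∑ j, 2 * r j * a j) 0 := by
    refine HasDerivAt.fun_sum fun j _ => ?_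
    simpa using ((hasDerivAt_id' (0 : ℝ)).mul_const (a j)).const_add (r j) |>.fun_pow 2
  have hne : ∑ j, (r + (0 : ℝ) • a) j ^ 2 ≠ 0 := by
    simpa [Finset.sum_eq_zero_iff_of_nonneg, sq_nonneg, funext_iff] using hr
  refine (hsq.sqrt hne).congr_deriv ?_
  have htwice : ∑ j, 2 * r j * a j = 2 * (r ⬝ᵥ a) := by
    simp only [dotProduct, Finset.mul_sum, mul_assoc]
  rw [zero_smul, add_zero, htwice, mul_div_mul_left _ _ two_ne_zero, inv_mul_eq_div]
  rfl

section

variable {m n : ℕ} {A : Matrix (Fin m) (Fin n) ℝ} {b : Fin m → ℝ} {lam : ℝ} {x : Fin n → ℝ}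

theorem IsSol.le_add_single (hsol : IsSol A b lam x) (i : Fin n) (t : ℝ) :
    l2 (A *ᵥ x - b) + lam * |x i| ≤ l2 (A *ᵥ x - b + t • Aᵀ i) + lam * |x i + t| := by
  have hopt := hsol (x + Pi.single i t)
  have hres : A *ᵥ (x + Pi.single i t) - b = A *ᵥ x - b + t • Aᵀ i := by
    ext j; simp [mulVec_add]; ring
  have hl1 := congrArg (lam * ·) (l1_add_single x i t)
  simp only [mul_add] at hl1
  unfold srObj at hopt
  rw [hres] at hopt
  linarith

theorem transpose_mulVec_smul_residual (c : ℝ) (i : Fin n) :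
    (Aᵀ *ᵥ (c • (b - A *ᵥ x))) i = -(c * ((A *ᵥ x - b) ⬝ᵥ Aᵀ i)) := by
  rw [← neg_sub, smul_neg, mulVec_neg, mulVec_smul, Pi.neg_apply, Pi.smul_apply, smul_eq_mul,
    mulVec, dotProduct_comm]

theorem IsSol.abs_transpose_mulVec_le (hsol : IsSol A b lam x) (hres : A *ᵥ x ≠ b)
    (hlam : 0 ≤ lam) (i : Fin n) :
    |(Aᵀ *ᵥ ((l2 (A *ᵥ x - b))⁻¹ • (b - A *ᵥ x))) i| ≤ lam := by
  rw [transpose_mulVec_smul_residual, abs_neg]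
  exact abs_le_of_hasDerivAt_of_forall_le (hasDerivAt_l2_add_smul (sub_ne_zero.2 hres) _) hlam
    (by simpa using hsol.le_add_single i)

theorem IsSol.abs_transpose_mulVec_eq (hsol : IsSol A b lam x) (hres : A *ᵥ x ≠ b)
    (hlam : 0 ≤ lam) {i : Fin n} (hi : x i ≠ 0) :
    |(Aᵀ *ᵥ ((l2 (A *ᵥ x - b))⁻¹ • (b - A *ᵥ x))) i| = lam := by
  rw [transpose_mulVec_smul_residual, abs_neg]
  exact abs_eq_of_hasDerivAt_of_forall_le (hasDerivAt_l2_add_smul (sub_ne_zero.2 hres) _) hlam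
    hi (by simpa using hsol.le_add_single i)

end

/-- intermediate implies weak: if x̄ solves the SR-LASSO,
Ax̄ ≠ b, and with ȳ := (b − Ax̄)/‖Ax̄ − b‖₂ and
J := {i : |Aᵢᵀȳ| = λ} one has ker A_J = {0} and b ∉ range A_J, then the weak
assumption holds at x̄: with I := supp(x̄), (i) ker A_I = {0}, b ∉ range A_I;
(ii) ∃ z ⊥ ȳ with A_Iᵀz = 0 and ‖A_{I^C}ᵀ(ȳ + z)‖_∞ < λ. -/
theorem stmt_10 {m n : ℕ} (A : Matrix (Fin m) (Fin n) ℝ) (b : Fin m → ℝ)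
    (lam : ℝ) (hlam : 0 < lam) (xbar : Fin n → ℝ)
    (hsol : IsSol A b lam xbar) (hres : A.mulVec xbar ≠ b)
    (ybar : Fin m → ℝ)
    (hybar : ybar = (l2 (A.mulVec xbar - b))⁻¹ • (b - A.mulVec xbar))
    -- ker A_J = {0}:
    (hkerJ : ∀ u : Fin n → ℝ,
      (∀ i, |Aᵀ.mulVec ybar i| ≠ lam → u i = 0) → A.mulVec u = 0 → u = 0)
    -- b ∉ rge A_J:
    (hrgeJ : ¬ ∃ u : Fin n → ℝ,
      (∀ i, |Aᵀ.mulVec ybar i| ≠ lam → u i = 0) ∧ A.mulVec u = b) :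
    -- (i) ker A_I = {0} and b ∉ rge A_I:
    (∀ u : Fin n → ℝ, (∀ i, xbar i = 0 → u i = 0) → A.mulVec u = 0 → u = 0) ∧
    (¬ ∃ u : Fin n → ℝ, (∀ i, xbar i = 0 → u i = 0) ∧ A.mulVec u = b) ∧
    -- (ii):
    (∃ z : Fin m → ℝ, dotp ybar z = 0 ∧
      (∀ i, xbar i ≠ 0 → dotp (fun r => A r i) z = 0) ∧
      (∀ i, xbar i = 0 → |dotp (fun r => A r i) (ybar + z)| < lam)) := by
  have hle : ∀ i, |(Aᵀ *ᵥ ybar) i| ≤ lam :=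
    hybar ▸ hsol.abs_transpose_mulVec_le hres hlam.le
  have hsupp : ∀ i, |(Aᵀ *ᵥ ybar) i| ≠ lam → xbar i = 0 := fun i hi =>
    not_not.1 fun hx => hi (hybar ▸ hsol.abs_transpose_mulVec_eq hres hlam.le hx)
  refine ⟨fun u hu => hkerJ u fun i hi => hu i (hsupp i hi),
    fun ⟨u, hu, hAu⟩ => hrgeJ ⟨u, fun i hi => hu i (hsupp i hi), hAu⟩, ?_⟩
  obtain ⟨z, hyz, hz⟩ := exists_dotProduct_eq_zero_and_transpose_mulVec_eq A ybar
    (fun i => |(Aᵀ *ᵥ ybar) i| = lam)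
    (fun β u hu h => eq_zero_of_smul_residual_add_mulVec_eq_zero hsupp hkerJ hrgeJ _ β hu
      (hybar ▸ h))
    (fun i => if xbar i = 0 then -(Aᵀ *ᵥ ybar) i else 0)
  obtain ⟨t, ht, hlt⟩ := exists_pos_forall_abs_add_mul_lt (p := fun i => xbar i = 0)
    (h := Aᵀ *ᵥ z) hlam fun i hi =>
      (hle i).lt_or_eq.imp_right fun heq => ⟨heq, by rw [hz i heq, if_pos hi]⟩
  refine ⟨t • z, ?_, fun i hi => ?_, fun i hi => ?_⟩
  · change ybar ⬝ᵥ t • z = 0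
    rw [dotProduct_smul, hyz, smul_zero]
  · change (Aᵀ *ᵥ t • z) i = 0
    rw [mulVec_smul, Pi.smul_apply, hz i (not_not.1 (mt (hsupp i) hi)), if_neg hi, smul_zero]
  · change |(Aᵀ *ᵥ (ybar + t • z)) i| < lam
    rw [mulVec_add, mulVec_smul]
    exact hlt i hi
end
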